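/- arXiv:1510.01355 — 3 statements merged into one kernel-verified Lean document; each statement's English description precedes it below -/
import Mathlib

section
/- Fix x̄ > 0, K ≥ 0 and C₀ ≥ 0. Let k_a : ℝ × ℝ → ℝ be measurable with |k_a(x, y)| ≤ K for all (x, y) ∈ [0, x̄] × [0, x̄], and let b, b̃ : ℝ → ℝ be measurable functions integrable on [0, x̄] with ∫₀^{x̄} |b| ≤ C₀ and ∫₀^{x̄} |b̃| ≤ C₀. Define the aggregation operator A[p](x) = (1/2)∫₀^{x} k_a(x − y, y) p(x − y) p(y) dy − p(x)∫₀^{x̄} k_a(x, y) p(y) dy. Then ∫₀^{x̄} |A[b](x) − A[b̃](x)| dx ≤ 3 C₀ K ∫₀^{x̄} |b(x) − b̃(x)| dx. -/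
open MeasureTheory intervalIntegral

/-- The aggregation operator of the flocculation model:
`A[p](x) = (1/2)∫₀ˣ k_a(x−y, y) p(x−y) p(y) dy − p(x)∫₀^{x̄} k_a(x, y) p(y) dy`. -/
noncomputable def aggOp (xbar : ℝ) (ka : ℝ → ℝ → ℝ) (p : ℝ → ℝ) (x : ℝ) : ℝ :=
  (1 / 2) * (∫ y in (0 : ℝ)..x, ka (x - y) y * p (x - y) * p y)
    - p x * ∫ y in (0 : ℝ)..xbar, ka x y * p y

/-!
Put `d = b - b̃`. Wherever the integrals involved exist, bilinearity gives
`A[b] - A[b̃] = ½ (G(b, d) + G(d, b̃)) - (d · L(b) + b̃ · L(d))`, with the gain term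
`G(p, q)(x) = ∫₀ˣ k_a(x - y, y) p(x - y) q(y) dy` and the loss rate
`L(p)(x) = ∫₀^{x̄} k_a(x, y) p(y) dy`.
Pointwise `|L(p)| ≤ K ‖p‖₁`, and `|G(p, q)| ≤ K (|p| ⋆ |q|)`, the convolution of `|p|` and `|q|`
truncated to `(0, x̄]`, whose integral is `‖p‖₁ ‖q‖₁`; the integrals defining `G(p, q)(x)` exist for
almost every `x` because this convolution does. Integrating,
`‖A[b] - A[b̃]‖₁ ≤ K (½ (‖b‖₁ + ‖b̃‖₁) + ‖b‖₁ + ‖b̃‖₁) ‖d‖₁ ≤ 3 C₀ K ‖d‖₁`.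
-/

open Set

section Convolution

variable {xbar x : ℝ} {p q : ℝ → ℝ}

noncomputable def absTrunc (xbar : ℝ) (f : ℝ → ℝ) : ℝ → ℝ :=
  (Ioc 0 xbar).indicator (|f ·|)

theorem absTrunc_nonneg (t : ℝ) : 0 ≤ absTrunc xbar p t :=
  indicator_nonneg (fun _ _ => abs_nonneg _) t

theorem integrable_absTrunc (hp : IntervalIntegrable p volume 0 xbar) :
    Integrable (absTrunc xbar p) :=
  (integrable_indicator_iff measurableSet_Ioc).2 hp.1.abs

theorem integral_absTrunc (hxbar : 0 ≤ xbar) :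
    ∫ t, absTrunc xbar p t = ∫ t in 0..xbar, |p t| := by
  rw [absTrunc, MeasureTheory.integral_indicator measurableSet_Ioc, integral_of_le hxbar]

noncomputable def convAbs (p q : ℝ → ℝ) (x : ℝ) : ℝ :=
  ∫ y in (0 : ℝ)..x, |p (x - y)| * |q y|

theorem indicator_convAbs_integrand_ae_eq (hx : x ≤ xbar) :
    (Ioc 0 x).indicator (fun y => |p (x - y)| * |q y|) =ᵐ[volume]
      fun t => absTrunc xbar q t * absTrunc xbar p (x - t) := by
  filter_upwards [Measure.ae_ne volume x] with y hy
  simp only [absTrunc, indicator, mem_Ioc]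
  split_ifs <;> grind

theorem convAbs_eq_convolution (hx0 : 0 ≤ x) (hx : x ≤ xbar) :
    convAbs p q x =
      convolution (absTrunc xbar q) (absTrunc xbar p) (ContinuousLinearMap.mul ℝ ℝ) volume x := by
  rw [convAbs, integral_of_le hx0, ← MeasureTheory.integral_indicator measurableSet_Ioc]
  exact integral_congr_ae (indicator_convAbs_integrand_ae_eq hx)

theorem intervalIntegrable_convAbs_integrand (hx0 : 0 ≤ x) (hx : x ≤ xbar)
    (h : ConvolutionExistsAt (absTrunc xbar q) (absTrunc xbar p) x (ContinuousLinearMap.mul ℝ ℝ)) :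
    IntervalIntegrable (fun y => |p (x - y)| * |q y|) volume 0 x := by
  rw [intervalIntegrable_iff_integrableOn_Ioc_of_le hx0,
    ← integrable_indicator_iff measurableSet_Ioc]
  exact h.congr (indicator_convAbs_integrand_ae_eq hx).symm

theorem ae_intervalIntegrable_convAbs_integrand (hp : IntervalIntegrable p volume 0 xbar)
    (hq : IntervalIntegrable q volume 0 xbar) :
    ∀ᵐ x, x ∈ Icc 0 xbar → IntervalIntegrable (fun y => |p (x - y)| * |q y|) volume 0 x := by
  filter_upwards [(integrable_absTrunc hq).ae_convolution_exists (ContinuousLinearMap.mul ℝ ℝ)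
    (integrable_absTrunc hp)] with x hx hxI
  exact intervalIntegrable_convAbs_integrand hxI.1 hxI.2 hx

theorem intervalIntegrable_convAbs (hxbar : 0 ≤ xbar) (hp : IntervalIntegrable p volume 0 xbar)
    (hq : IntervalIntegrable q volume 0 xbar) :
    IntervalIntegrable (convAbs p q) volume 0 xbar := by
  rw [intervalIntegrable_iff_integrableOn_Ioc_of_le hxbar]
  refine ((integrable_absTrunc hq).integrable_convolution (ContinuousLinearMap.mul ℝ ℝ)
    (integrable_absTrunc hp)).integrableOn.congr_fun (fun x hx => ?_) measurableSet_Ioc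
  exact (convAbs_eq_convolution hx.1.le hx.2).symm

theorem integral_convAbs_le (hxbar : 0 ≤ xbar) (hp : IntervalIntegrable p volume 0 xbar)
    (hq : IntervalIntegrable q volume 0 xbar) :
    ∫ x in 0..xbar, convAbs p q x ≤ (∫ x in 0..xbar, |p x|) * ∫ x in 0..xbar, |q x| := by
  set L := ContinuousLinearMap.mul ℝ ℝ
  have hconv := (integrable_absTrunc hq).integrable_convolution L (integrable_absTrunc hp)
  calc ∫ x in 0..xbar, convAbs p q x
      = ∫ x in Ioc 0 xbar, convolution (absTrunc xbar q) (absTrunc xbar p) L volume x := by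
        rw [integral_of_le hxbar]
        exact setIntegral_congr_fun measurableSet_Ioc fun x hx =>
          convAbs_eq_convolution hx.1.le hx.2
    _ ≤ ∫ x, convolution (absTrunc xbar q) (absTrunc xbar p) L volume x :=
        setIntegral_le_integral hconv (ae_of_all _ fun x =>
          integral_nonneg fun t => mul_nonneg (absTrunc_nonneg t) (absTrunc_nonneg _))
    _ = (∫ x in 0..xbar, |p x|) * ∫ x in 0..xbar, |q x| := by
        rw [integral_convolution L (integrable_absTrunc hq) (integrable_absTrunc hp),
          integral_absTrunc hxbar, integral_absTrunc hxbar, mul_comm]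
        rfl

end Convolution

section Operator

variable {xbar K x : ℝ} {ka : ℝ → ℝ → ℝ} {p q : ℝ → ℝ}

noncomputable def gainTerm (ka : ℝ → ℝ → ℝ) (p q : ℝ → ℝ) (x : ℝ) : ℝ :=
  ∫ y in (0 : ℝ)..x, ka (x - y) y * p (x - y) * q y

noncomputable def lossRate (xbar : ℝ) (ka : ℝ → ℝ → ℝ) (p : ℝ → ℝ) (x : ℝ) : ℝ :=
  ∫ y in (0 : ℝ)..xbar, ka x y * p y

theorem aggOp_eq_gainTerm_sub_lossRate :
    aggOp xbar ka p x = 1 / 2 * gainTerm ka p p x - p x * lossRate xbar ka p x :=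
  rfl

theorem aggOp_sub_aggOp
    (hpp : IntervalIntegrable (fun y => ka (x - y) y * p (x - y) * p y) volume 0 x)
    (hqq : IntervalIntegrable (fun y => ka (x - y) y * q (x - y) * q y) volume 0 x)
    (hpd : IntervalIntegrable (fun y => ka (x - y) y * p (x - y) * (p - q) y) volume 0 x)
    (hdq : IntervalIntegrable (fun y => ka (x - y) y * (p - q) (x - y) * q y) volume 0 x)
    (hlp : IntervalIntegrable (fun y => ka x y * p y) volume 0 xbar)
    (hlq : IntervalIntegrable (fun y => ka x y * q y) volume 0 xbar) :
    aggOp xbar ka p x - aggOp xbar ka q x =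
      1 / 2 * (gainTerm ka p (p - q) x + gainTerm ka (p - q) q x)
        - ((p - q) x * lossRate xbar ka p x + q x * lossRate xbar ka (p - q) x) := by
  have hgain : gainTerm ka p p x - gainTerm ka q q x =
      gainTerm ka p (p - q) x + gainTerm ka (p - q) q x := by
    simp only [gainTerm]
    rw [← integral_sub hpp hqq, ← integral_add hpd hdq]
    refine integral_congr fun y _ => ?_
    simp only [Pi.sub_apply]
    ring
  have hloss : lossRate xbar ka p x - lossRate xbar ka q x = lossRate xbar ka (p - q) x := by
    simp only [lossRate]
    rw [← integral_sub hlp hlq]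
    simp only [Pi.sub_apply, mul_sub]
  rw [aggOp_eq_gainTerm_sub_lossRate, aggOp_eq_gainTerm_sub_lossRate, ← hgain, ← hloss,
    Pi.sub_apply]
  ring

theorem norm_gainIntegrand_le
    (hka : ∀ x ∈ Icc (0 : ℝ) xbar, ∀ y ∈ Icc (0 : ℝ) xbar, |ka x y| ≤ K)
    (hx : x ≤ xbar) {y : ℝ} (hy : y ∈ Ioc 0 x) :
    ‖ka (x - y) y * p (x - y) * q y‖ ≤ K * (|p (x - y)| * |q y|) := by
  rw [Real.norm_eq_abs, abs_mul, abs_mul, mul_assoc]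
  gcongr
  exact hka _ ⟨by linarith [hy.2], by linarith [hy.1]⟩ _ ⟨hy.1.le, hy.2.trans hx⟩

theorem intervalIntegrable_gainIntegrand (hka_meas : Measurable (Function.uncurry ka))
    (hka : ∀ x ∈ Icc (0 : ℝ) xbar, ∀ y ∈ Icc (0 : ℝ) xbar, |ka x y| ≤ K)
    (hp : Measurable p) (hq : Measurable q) (hx0 : 0 ≤ x) (hx : x ≤ xbar)
    (hpq : IntervalIntegrable (fun y => |p (x - y)| * |q y|) volume 0 x) :
    IntervalIntegrable (fun y => ka (x - y) y * p (x - y) * q y) volume 0 x := by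
  refine (hpq.const_mul K).mono_fun' ?_ ?_
  · exact ((hka_meas.comp (by fun_prop : Measurable fun y => (x - y, y))).mul
      (hp.comp (by fun_prop))).mul hq |>.aestronglyMeasurable
  · rw [uIoc_of_le hx0, Filter.EventuallyLE, ae_restrict_iff' measurableSet_Ioc]
    exact ae_of_all _ fun y hy => norm_gainIntegrand_le hka hx hy

theorem abs_gainTerm_le (hka : ∀ x ∈ Icc (0 : ℝ) xbar, ∀ y ∈ Icc (0 : ℝ) xbar, |ka x y| ≤ K)
    (hx0 : 0 ≤ x) (hx : x ≤ xbar)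
    (hpq : IntervalIntegrable (fun y => |p (x - y)| * |q y|) volume 0 x) :
    |gainTerm ka p q x| ≤ K * convAbs p q x := by
  rw [← Real.norm_eq_abs, convAbs, ← intervalIntegral.integral_const_mul]
  exact norm_integral_le_of_norm_le hx0
    (ae_of_all _ fun y hy => norm_gainIntegrand_le hka hx hy) (hpq.const_mul K)

theorem intervalIntegrable_lossIntegrand (hka_meas : Measurable (Function.uncurry ka))
    (hka : ∀ x ∈ Icc (0 : ℝ) xbar, ∀ y ∈ Icc (0 : ℝ) xbar, |ka x y| ≤ K)
    (hxbar : 0 ≤ xbar) (hx : x ∈ Icc 0 xbar) (hp : Measurable p)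
    (hpI : IntervalIntegrable p volume 0 xbar) :
    IntervalIntegrable (fun y => ka x y * p y) volume 0 xbar := by
  refine (hpI.abs.const_mul K).mono_fun' ?_ ?_
  · exact ((hka_meas.comp (by fun_prop : Measurable fun y => (x, y))).mul hp).aestronglyMeasurable
  · rw [uIoc_of_le hxbar, Filter.EventuallyLE, ae_restrict_iff' measurableSet_Ioc]
    refine ae_of_all _ fun y hy => ?_
    rw [Real.norm_eq_abs, abs_mul]
    gcongr
    exact hka x hx y (Ioc_subset_Icc_self hy)

theorem abs_lossRate_le (hka : ∀ x ∈ Icc (0 : ℝ) xbar, ∀ y ∈ Icc (0 : ℝ) xbar, |ka x y| ≤ K)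
    (hxbar : 0 ≤ xbar) (hx : x ∈ Icc 0 xbar) (hpI : IntervalIntegrable p volume 0 xbar) :
    |lossRate xbar ka p x| ≤ K * ∫ y in 0..xbar, |p y| := by
  rw [← Real.norm_eq_abs, lossRate, ← intervalIntegral.integral_const_mul]
  refine norm_integral_le_of_norm_le hxbar (ae_of_all _ fun y hy => ?_) (hpI.abs.const_mul K)
  rw [Real.norm_eq_abs, abs_mul]
  gcongr
  exact hka x hx y (Ioc_subset_Icc_self hy)

theorem abs_aggOp_sub_aggOp_le (hka_meas : Measurable (Function.uncurry ka))
    (hka : ∀ x ∈ Icc (0 : ℝ) xbar, ∀ y ∈ Icc (0 : ℝ) xbar, |ka x y| ≤ K)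
    (hxbar : 0 ≤ xbar) (hx : x ∈ Icc 0 xbar) (hp : Measurable p) (hq : Measurable q)
    (hpI : IntervalIntegrable p volume 0 xbar) (hqI : IntervalIntegrable q volume 0 xbar)
    (hpp : IntervalIntegrable (fun y => |p (x - y)| * |p y|) volume 0 x)
    (hqq : IntervalIntegrable (fun y => |q (x - y)| * |q y|) volume 0 x)
    (hpd : IntervalIntegrable (fun y => |p (x - y)| * |(p - q) y|) volume 0 x)
    (hdq : IntervalIntegrable (fun y => |(p - q) (x - y)| * |q y|) volume 0 x) :
    |aggOp xbar ka p x - aggOp xbar ka q x| ≤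
      K / 2 * (convAbs p (p - q) x + convAbs (p - q) q x)
        + K * (∫ y in 0..xbar, |p y|) * |(p - q) x|
        + K * (∫ y in 0..xbar, |(p - q) y|) * |q x| := by
  have hd := hp.sub hq
  have gain {f g : ℝ → ℝ} (hf : Measurable f) (hg : Measurable g) :=
    intervalIntegrable_gainIntegrand hka_meas hka hf hg hx.1 hx.2
  rw [aggOp_sub_aggOp (gain hp hp hpp) (gain hq hq hqq) (gain hp hd hpd) (gain hd hq hdq)
    (intervalIntegrable_lossIntegrand hka_meas hka hxbar hx hp hpI)
    (intervalIntegrable_lossIntegrand hka_meas hka hxbar hx hq hqI)]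
  have hgain_pd := abs_gainTerm_le hka hx.1 hx.2 hpd
  have hgain_dq := abs_gainTerm_le hka hx.1 hx.2 hdq
  have hloss_p := abs_lossRate_le hka hxbar hx hpI
  have hloss_d := abs_lossRate_le (p := p - q) hka hxbar hx (hpI.sub hqI)
  calc _ ≤ 1 / 2 * (|gainTerm ka p (p - q) x| + |gainTerm ka (p - q) q x|)
          + (|(p - q) x| * |lossRate xbar ka p x| + |q x| * |lossRate xbar ka (p - q) x|) := by
        refine (abs_sub _ _).trans (add_le_add ?_ ?_)
        · rw [abs_mul, abs_of_pos one_half_pos]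
          gcongr
          exact abs_add_le _ _
        · rw [← abs_mul, ← abs_mul]
          exact abs_add_le _ _
    _ ≤ 1 / 2 * (K * convAbs p (p - q) x + K * convAbs (p - q) q x)
          + (|(p - q) x| * (K * ∫ y in 0..xbar, |p y|)
            + |q x| * (K * ∫ y in 0..xbar, |(p - q) y|)) := by
        gcongr
    _ = _ := by ring

theorem integral_abs_aggOp_sub_aggOp_le (hka_meas : Measurable (Function.uncurry ka))
    (hka : ∀ x ∈ Icc (0 : ℝ) xbar, ∀ y ∈ Icc (0 : ℝ) xbar, |ka x y| ≤ K)
    (hxbar : 0 ≤ xbar) (hp : Measurable p) (hq : Measurable q)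
    (hpI : IntervalIntegrable p volume 0 xbar) (hqI : IntervalIntegrable q volume 0 xbar) :
    ∫ x in 0..xbar, |aggOp xbar ka p x - aggOp xbar ka q x| ≤
      K / 2 * ((∫ x in 0..xbar, convAbs p (p - q) x) + ∫ x in 0..xbar, convAbs (p - q) q x)
        + K * (∫ y in 0..xbar, |p y|) * (∫ x in 0..xbar, |(p - q) x|)
        + K * (∫ y in 0..xbar, |(p - q) y|) * ∫ x in 0..xbar, |q x| := by
  have hdI : IntervalIntegrable (p - q) volume 0 xbar := hpI.sub hqI
  have hP := intervalIntegrable_convAbs hxbar hpI hdI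
  have hQ := intervalIntegrable_convAbs hxbar hdI hqI
  have hPQ := (hP.add hQ).const_mul (K / 2)
  have hD := hdI.abs.const_mul (K * ∫ y in 0..xbar, |p y|)
  have hq' := hqI.abs.const_mul (K * ∫ y in 0..xbar, |(p - q) y|)
  calc _ ≤ ∫ x in 0..xbar, (K / 2 * (convAbs p (p - q) x + convAbs (p - q) q x)
          + K * (∫ y in 0..xbar, |p y|) * |(p - q) x|
          + K * (∫ y in 0..xbar, |(p - q) y|) * |q x|) := by
        rw [integral_of_le hxbar, integral_of_le hxbar]
        refine integral_mono_of_nonneg (ae_of_all _ fun _ => abs_nonneg _)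
          ((hPQ.add hD).add hq').1 ?_
        rw [Filter.EventuallyLE, ae_restrict_iff' measurableSet_Ioc]
        filter_upwards [ae_intervalIntegrable_convAbs_integrand hpI hpI,
          ae_intervalIntegrable_convAbs_integrand hqI hqI,
          ae_intervalIntegrable_convAbs_integrand hpI hdI,
          ae_intervalIntegrable_convAbs_integrand hdI hqI] with x hpp hqq hpd hdq hx
        have hx' := Ioc_subset_Icc_self hx
        exact abs_aggOp_sub_aggOp_le hka_meas hka hxbar hx' hp hq hpI hqI
          (hpp hx') (hqq hx') (hpd hx') (hdq hx')
    _ = _ := by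
        rw [integral_add (hPQ.add hD) hq', integral_add hPQ hD, intervalIntegral.integral_const_mul,
          intervalIntegral.integral_const_mul, intervalIntegral.integral_const_mul,
          integral_add hP hQ]

end Operator

theorem aggOp_locally_lipschitz_general
    (xbar : ℝ) (hxbar : 0 < xbar) (K C0 : ℝ) (hK : 0 ≤ K)
    (ka : ℝ → ℝ → ℝ) (hka_meas : Measurable (Function.uncurry ka))
    (hka : ∀ x ∈ Set.Icc (0 : ℝ) xbar, ∀ y ∈ Set.Icc (0 : ℝ) xbar, |ka x y| ≤ K)
    (b btil : ℝ → ℝ) (hb : Measurable b) (hbtil : Measurable btil)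
    (hbI : IntegrableOn b (Set.Icc 0 xbar)) (hbtilI : IntegrableOn btil (Set.Icc 0 xbar))
    (hbC : (∫ x in (0 : ℝ)..xbar, |b x|) ≤ C0)
    (hbtilC : (∫ x in (0 : ℝ)..xbar, |btil x|) ≤ C0) :
    (∫ x in (0 : ℝ)..xbar, |aggOp xbar ka b x - aggOp xbar ka btil x|) ≤
      3 * C0 * K * ∫ x in (0 : ℝ)..xbar, |b x - btil x| := by
  have h0 : 0 ≤ xbar := hxbar.le
  have hbI' := (intervalIntegrable_iff_integrableOn_Icc_of_le h0).2 hbI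
  have hbtilI' := (intervalIntegrable_iff_integrableOn_Icc_of_le h0).2 hbtilI
  have hdI : IntervalIntegrable (b - btil) volume 0 xbar := hbI'.sub hbtilI'
  have hKnD : 0 ≤ K * ∫ x in 0..xbar, |(b - btil) x| :=
    mul_nonneg hK (integral_nonneg h0 fun _ _ => abs_nonneg _)
  calc _ ≤ _ := integral_abs_aggOp_sub_aggOp_le hka_meas hka h0 hb hbtil hbI' hbtilI'
    _ ≤ 3 * C0 * K * ∫ x in 0..xbar, |(b - btil) x| := by
        linarith [mul_le_mul_of_nonneg_left (integral_convAbs_le h0 hbI' hdI) hK,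
          mul_le_mul_of_nonneg_left (integral_convAbs_le h0 hdI hbtilI') hK,
          mul_le_mul_of_nonneg_left hbC hKnD, mul_le_mul_of_nonneg_left hbtilC hKnD]

/-- Local Lipschitz estimate for the aggregation operator on `L¹([0, x̄])`:
`‖A[b] − A[b̃]‖₁ ≤ 3 C₀ ‖k_a‖_∞ ‖b − b̃‖₁`. -/
theorem aggOp_locally_lipschitz
    (xbar : ℝ) (hxbar : 0 < xbar) (K C0 : ℝ) (hK : 0 ≤ K) (hC0 : 0 ≤ C0)
    (ka : ℝ → ℝ → ℝ) (hka_meas : Measurable (Function.uncurry ka))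
    (hka : ∀ x ∈ Set.Icc (0 : ℝ) xbar, ∀ y ∈ Set.Icc (0 : ℝ) xbar, |ka x y| ≤ K)
    (b btil : ℝ → ℝ) (hb : Measurable b) (hbtil : Measurable btil)
    (hbI : IntegrableOn b (Set.Icc 0 xbar)) (hbtilI : IntegrableOn btil (Set.Icc 0 xbar))
    (hbC : (∫ x in (0 : ℝ)..xbar, |b x|) ≤ C0)
    (hbtilC : (∫ x in (0 : ℝ)..xbar, |btil x|) ≤ C0) :
    (∫ x in (0 : ℝ)..xbar, |aggOp xbar ka b x - aggOp xbar ka btil x|) ≤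
      3 * C0 * K * ∫ x in (0 : ℝ)..xbar, |b x - btil x| :=
  aggOp_locally_lipschitz_general xbar hxbar K C0 hK ka hka_meas hka b btil hb hbtil hbI hbtilI hbC
    hbtilC
end

section
/- Fix x̄ > 0, K ≥ 0, M ≥ 0 and C₀ ≥ 0. Let k_a : ℝ × ℝ → ℝ be measurable with |k_a(x, y)| ≤ K on [0, x̄] × [0, x̄], let μ : ℝ → ℝ be measurable with |μ(x)| ≤ M on [0, x̄], and let b, b̃ : ℝ → ℝ be measurable, integrable on [0, x̄], with ∫₀^{x̄} |b| ≤ C₀ and ∫₀^{x̄} |b̃| ≤ C₀. Define A[p](x) = (1/2)∫₀^{x} k_a(x − y, y) p(x − y) p(y) dy − p(x)∫₀^{x̄} k_a(x, y) p(y) dy and R[p](x) = −μ(x) p(x). Then ∫₀^{x̄} |(A[b](x) + R[b](x)) − (A[b̃](x) + R[b̃](x))| dx ≤ (3 C₀ K + M) ∫₀^{x̄} |b(x) − b̃(x)| dx. -/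
open MeasureTheory intervalIntegral

/-- The removal operator `R[p](x) = −μ(x) p(x)`. -/
def remOp (μ : ℝ → ℝ) (p : ℝ → ℝ) (x : ℝ) : ℝ := -(μ x) * p x

/-!
Write `A[p] = ½ G(p, p) − p · L(p)` with the bilinear gain
`G(p, q)(x) = ∫₀ˣ k_a(x−y, y) p(x−y) q(y) dy` and the linear loss rate
`L(p)(x) = ∫₀^x̄ k_a(x, y) p(y) dy`. With `d = b − b̃`,
`A[b] − A[b̃] = ½ (G(b, d) + G(d, b̃)) − (d · L(b) + b̃ · L(d))`.
Pointwise `|L(p)| ≤ K ‖p‖₁`, and extending the integrand of `G(p, q)` by zero off the triangle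
`0 < y ≤ x ≤ x̄` dominates it by `K` times the convolution integrand `|q(y)| |p(x − y)|` of the
truncations, so by Fubini and translation invariance `‖G(p, q)‖₁ ≤ K ‖p‖₁ ‖q‖₁`. Hence
`‖A[b] − A[b̃]‖₁ ≤ (3/2) K (‖b‖₁ + ‖b̃‖₁) ‖d‖₁ ≤ 3 C₀ K ‖d‖₁`, while `|R[b] − R[b̃]| ≤ M |d|`.
-/

open Set

theorem MeasureTheory.Integrable.abs_mul_abs_comp_sub {G : Type*} [AddGroup G] [MeasurableSpace G]
    [MeasurableAdd₂ G] [MeasurableNeg G] {μ : Measure G} [SFinite μ] [μ.IsAddRightInvariant]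
    {f g : G → ℝ} (hf : Integrable f μ) (hg : Integrable g μ) :
    Integrable (fun z : G × G => |f z.2| * |g (z.1 - z.2)|) (μ.prod μ) := by
  simpa only [ContinuousLinearMap.mul_apply'] using
    hf.abs.convolution_integrand (ContinuousLinearMap.mul ℝ ℝ) hg.abs

theorem integral_abs_mul_abs_comp_sub {G : Type*} [AddGroup G] [MeasurableSpace G]
    [MeasurableAdd₂ G] [MeasurableNeg G] {μ : Measure G} [SFinite μ] [μ.IsAddRightInvariant]
    {f g : G → ℝ} (hf : Integrable f μ) (hg : Integrable g μ) :
    ∫ z, |f z.2| * |g (z.1 - z.2)| ∂(μ.prod μ) = (∫ y, |f y| ∂μ) * ∫ x, |g x| ∂μ := by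
  rw [integral_prod_symm _ (hf.abs_mul_abs_comp_sub hg), ← MeasureTheory.integral_mul_const]
  refine integral_congr_ae (ae_of_all _ fun y => ?_)
  dsimp only
  rw [MeasureTheory.integral_const_mul, integral_sub_right_eq_self (fun x => |g x|)]

-- Needs no integrability of `f`, so the operators never have to be shown measurable.
theorem integral_abs_le_of_ae_abs_le {μ : Measure ℝ} {a b : ℝ} {f g : ℝ → ℝ} (hab : a ≤ b)
    (hg : IntervalIntegrable g μ a b) (h : ∀ᵐ x ∂μ, x ∈ Icc a b → |f x| ≤ g x) :
    ∫ x in a..b, |f x| ∂μ ≤ ∫ x in a..b, g x ∂μ := by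
  rw [integral_of_le hab, integral_of_le hab]
  refine integral_mono_of_nonneg (ae_of_all _ fun _ => abs_nonneg _) hg.1 ?_
  exact (ae_restrict_iff' measurableSet_Ioc).2 (h.mono fun x hx hxI => hx (Ioc_subset_Icc_self hxI))

theorem integral_abs_indicator_Icc {a b : ℝ} (hab : a ≤ b) (f : ℝ → ℝ) :
    ∫ x, |(Icc a b).indicator f x| = ∫ x in a..b, |f x| := by
  simp_rw [← Real.norm_eq_abs, norm_indicator_eq_indicator_norm]
  rw [MeasureTheory.integral_indicator measurableSet_Icc, integral_Icc_eq_integral_Ioc,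
    integral_of_le hab]

noncomputable def aggGain (ka : ℝ → ℝ → ℝ) (p q : ℝ → ℝ) (x : ℝ) : ℝ :=
  ∫ y in (0 : ℝ)..x, ka (x - y) y * p (x - y) * q y

noncomputable def aggLossRate (xbar : ℝ) (ka : ℝ → ℝ → ℝ) (p : ℝ → ℝ) (x : ℝ) : ℝ :=
  ∫ y in (0 : ℝ)..xbar, ka x y * p y

noncomputable def aggGainIntegrand (xbar : ℝ) (ka : ℝ → ℝ → ℝ) (p q : ℝ → ℝ) : ℝ × ℝ → ℝ :=
  {z : ℝ × ℝ | 0 < z.2 ∧ z.2 ≤ z.1 ∧ z.1 ≤ xbar}.indicator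
    fun z => ka (z.1 - z.2) z.2 * p (z.1 - z.2) * q z.2

section Aggregation

variable {xbar K x : ℝ} {ka : ℝ → ℝ → ℝ} {p p' q : ℝ → ℝ}

theorem aggGainIntegrand_slice_eq_indicator (hx : x ≤ xbar) :
    (fun y => aggGainIntegrand xbar ka p q (x, y)) =
      (Ioc 0 x).indicator fun y => ka (x - y) y * p (x - y) * q y := by
  ext y
  simp only [aggGainIntegrand, indicator_apply, mem_ofPred_eq, mem_Ioc]
  congr 1
  exact propext ⟨fun h => ⟨h.1, h.2.1⟩, fun h => ⟨h.1, h.2, hx⟩⟩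

theorem aggGain_eq_integral_aggGainIntegrand (hx₀ : 0 ≤ x) (hx : x ≤ xbar) :
    aggGain ka p q x = ∫ y, aggGainIntegrand xbar ka p q (x, y) := by
  rw [aggGain, integral_of_le hx₀, aggGainIntegrand_slice_eq_indicator hx,
    MeasureTheory.integral_indicator measurableSet_Ioc]

theorem measurable_aggGainIntegrand (hka : Measurable (Function.uncurry ka))
    (hp : Measurable p) (hq : Measurable q) : Measurable (aggGainIntegrand xbar ka p q) := by
  refine Measurable.indicator ?_ ?_
  · exact ((hka.comp ((measurable_fst.sub measurable_snd).prodMk measurable_snd)).mul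
      (hp.comp (measurable_fst.sub measurable_snd))).mul (hq.comp measurable_snd)
  · exact (measurableSet_lt measurable_const measurable_snd).inter
      ((measurableSet_le measurable_snd measurable_fst).inter
        (measurableSet_le measurable_fst measurable_const))

theorem abs_aggGainIntegrand_le (hK : 0 ≤ K)
    (hka : ∀ x ∈ Icc (0 : ℝ) xbar, ∀ y ∈ Icc (0 : ℝ) xbar, |ka x y| ≤ K) (z : ℝ × ℝ) :
    |aggGainIntegrand xbar ka p q z| ≤
      K * (|(Icc 0 xbar).indicator q z.2| * |(Icc 0 xbar).indicator p (z.1 - z.2)|) := by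
  rw [aggGainIntegrand, indicator_apply]
  split_ifs with hz
  · obtain ⟨h₀, h₁, h₂⟩ := hz
    have hy : z.2 ∈ Icc 0 xbar := ⟨h₀.le, h₁.trans h₂⟩
    have hxy : z.1 - z.2 ∈ Icc 0 xbar := ⟨by linarith, by linarith⟩
    rw [indicator_of_mem hy, indicator_of_mem hxy, abs_mul, abs_mul, mul_comm |q z.2|,
      ← mul_assoc]
    gcongr
    exact hka _ hxy _ hy
  · rw [abs_zero]
    positivity

theorem integrable_aggGainIntegrand (hK : 0 ≤ K) (hka_meas : Measurable (Function.uncurry ka))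
    (hka : ∀ x ∈ Icc (0 : ℝ) xbar, ∀ y ∈ Icc (0 : ℝ) xbar, |ka x y| ≤ K)
    (hp : Measurable p) (hq : Measurable q)
    (hpI : IntegrableOn p (Icc 0 xbar)) (hqI : IntegrableOn q (Icc 0 xbar)) :
    Integrable (aggGainIntegrand xbar ka p q) (volume.prod volume) :=
  (((hqI.integrable_indicator measurableSet_Icc).abs_mul_abs_comp_sub
    (hpI.integrable_indicator measurableSet_Icc)).const_mul K).mono'
    (measurable_aggGainIntegrand hka_meas hp hq).aestronglyMeasurable
    (ae_of_all _ (abs_aggGainIntegrand_le hK hka))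

theorem ae_intervalIntegrable_aggGain_integrand (hK : 0 ≤ K)
    (hka_meas : Measurable (Function.uncurry ka))
    (hka : ∀ x ∈ Icc (0 : ℝ) xbar, ∀ y ∈ Icc (0 : ℝ) xbar, |ka x y| ≤ K)
    (hp : Measurable p) (hq : Measurable q)
    (hpI : IntegrableOn p (Icc 0 xbar)) (hqI : IntegrableOn q (Icc 0 xbar)) :
    ∀ᵐ x, x ∈ Icc 0 xbar →
      IntervalIntegrable (fun y => ka (x - y) y * p (x - y) * q y) volume 0 x := by
  filter_upwards [(integrable_aggGainIntegrand hK hka_meas hka hp hq hpI hqI).prod_right_ae]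
    with x hx hxI
  rw [aggGainIntegrand_slice_eq_indicator hxI.2, integrable_indicator_iff measurableSet_Ioc] at hx
  exact (intervalIntegrable_iff_integrableOn_Ioc_of_le hxI.1).2 hx

theorem intervalIntegrable_aggGain (hxbar : 0 ≤ xbar) (hK : 0 ≤ K)
    (hka_meas : Measurable (Function.uncurry ka))
    (hka : ∀ x ∈ Icc (0 : ℝ) xbar, ∀ y ∈ Icc (0 : ℝ) xbar, |ka x y| ≤ K)
    (hp : Measurable p) (hq : Measurable q)
    (hpI : IntegrableOn p (Icc 0 xbar)) (hqI : IntegrableOn q (Icc 0 xbar)) :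
    IntervalIntegrable (aggGain ka p q) volume 0 xbar := by
  refine (intervalIntegrable_iff_integrableOn_Ioc_of_le hxbar).2 ?_
  refine (integrable_aggGainIntegrand hK hka_meas hka hp hq hpI hqI).integral_prod_left
    |>.integrableOn.congr_fun (fun x hx => ?_) measurableSet_Ioc
  exact (aggGain_eq_integral_aggGainIntegrand hx.1.le hx.2).symm

theorem integral_abs_aggGain_le (hxbar : 0 ≤ xbar) (hK : 0 ≤ K)
    (hka_meas : Measurable (Function.uncurry ka))
    (hka : ∀ x ∈ Icc (0 : ℝ) xbar, ∀ y ∈ Icc (0 : ℝ) xbar, |ka x y| ≤ K)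
    (hp : Measurable p) (hq : Measurable q)
    (hpI : IntegrableOn p (Icc 0 xbar)) (hqI : IntegrableOn q (Icc 0 xbar)) :
    ∫ x in (0 : ℝ)..xbar, |aggGain ka p q x| ≤
      K * (∫ x in (0 : ℝ)..xbar, |p x|) * ∫ x in (0 : ℝ)..xbar, |q x| := by
  set T := aggGainIntegrand xbar ka p q
  have hT := integrable_aggGainIntegrand hK hka_meas hka hp hq hpI hqI
  have hP := hpI.integrable_indicator measurableSet_Icc
  have hQ := hqI.integrable_indicator measurableSet_Icc
  calc ∫ x in (0 : ℝ)..xbar, |aggGain ka p q x|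
      = ∫ x in Ioc 0 xbar, |∫ y, T (x, y)| := by
        rw [integral_of_le hxbar]
        refine setIntegral_congr_fun measurableSet_Ioc fun x hx => ?_
        rw [aggGain_eq_integral_aggGainIntegrand hx.1.le hx.2]
    _ ≤ ∫ x, |∫ y, T (x, y)| :=
        setIntegral_le_integral hT.integral_prod_left.abs (ae_of_all _ fun _ => abs_nonneg _)
    _ ≤ ∫ x, ∫ y, |T (x, y)| :=
        integral_mono hT.integral_prod_left.abs hT.integral_norm_prod_left
          fun x => abs_integral_le_integral_abs
    _ = ∫ z, |T z| ∂(volume.prod volume) := (integral_prod _ hT.abs).symm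
    _ ≤ ∫ z, K * (|(Icc 0 xbar).indicator q z.2| * |(Icc 0 xbar).indicator p (z.1 - z.2)|)
          ∂(volume.prod volume) :=
        integral_mono hT.abs ((hQ.abs_mul_abs_comp_sub hP).const_mul K)
          (abs_aggGainIntegrand_le hK hka)
    _ = K * (∫ x in (0 : ℝ)..xbar, |p x|) * ∫ x in (0 : ℝ)..xbar, |q x| := by
        rw [MeasureTheory.integral_const_mul, integral_abs_mul_abs_comp_sub hQ hP,
          integral_abs_indicator_Icc hxbar, integral_abs_indicator_Icc hxbar]
        ring

theorem intervalIntegrable_kernel_mul (hka_meas : Measurable (Function.uncurry ka))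
    (hka : ∀ x ∈ Icc (0 : ℝ) xbar, ∀ y ∈ Icc (0 : ℝ) xbar, |ka x y| ≤ K)
    (hpI : IntegrableOn p (Icc 0 xbar)) (hx : x ∈ Icc 0 xbar) :
    IntervalIntegrable (fun y => ka x y * p y) volume 0 xbar := by
  refine (intervalIntegrable_iff_integrableOn_Icc_of_le (hx.1.trans hx.2)).2 ?_
  refine hpI.bdd_mul (c := K)
    (hka_meas.comp (measurable_const.prodMk measurable_id)).aestronglyMeasurable ?_
  exact (ae_restrict_iff' measurableSet_Icc).2 (ae_of_all _ fun y hy => hka x hx y hy)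

theorem abs_aggLossRate_le (hka : ∀ x ∈ Icc (0 : ℝ) xbar, ∀ y ∈ Icc (0 : ℝ) xbar, |ka x y| ≤ K)
    (hpI : IntegrableOn p (Icc 0 xbar)) (hx : x ∈ Icc 0 xbar) :
    |aggLossRate xbar ka p x| ≤ K * ∫ y in (0 : ℝ)..xbar, |p y| := by
  have hxbar : 0 ≤ xbar := hx.1.trans hx.2
  rw [aggLossRate, ← Real.norm_eq_abs, ← intervalIntegral.integral_const_mul]
  refine norm_integral_le_of_norm_le hxbar (ae_of_all _ fun y hy => ?_)
    (((intervalIntegrable_iff_integrableOn_Icc_of_le hxbar).2 hpI).abs.const_mul K)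
  rw [norm_mul, Real.norm_eq_abs, Real.norm_eq_abs]
  gcongr
  exact hka x hx y ⟨hy.1.le, hy.2⟩

theorem aggLossRate_sub (hp : IntervalIntegrable (fun y => ka x y * p y) volume 0 xbar)
    (hp' : IntervalIntegrable (fun y => ka x y * p' y) volume 0 xbar) :
    aggLossRate xbar ka p x - aggLossRate xbar ka p' x = aggLossRate xbar ka (p - p') x := by
  simp only [aggLossRate, ← integral_sub hp hp', Pi.sub_apply, mul_sub]

theorem aggGain_sub_aggGain
    (h₁ : IntervalIntegrable (fun y => ka (x - y) y * p (x - y) * p y) volume 0 x)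
    (h₂ : IntervalIntegrable (fun y => ka (x - y) y * p' (x - y) * p' y) volume 0 x)
    (h₃ : IntervalIntegrable (fun y => ka (x - y) y * p (x - y) * (p - p') y) volume 0 x)
    (h₄ : IntervalIntegrable (fun y => ka (x - y) y * (p - p') (x - y) * p' y) volume 0 x) :
    aggGain ka p p x - aggGain ka p' p' x = aggGain ka p (p - p') x + aggGain ka (p - p') p' x := by
  rw [aggGain, aggGain, aggGain, aggGain, ← integral_sub h₁ h₂, ← integral_add h₃ h₄]
  congr 1
  ext y
  simp only [Pi.sub_apply]
  ring

theorem ae_abs_aggOp_sub_aggOp_le (hK : 0 ≤ K) (hka_meas : Measurable (Function.uncurry ka))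
    (hka : ∀ x ∈ Icc (0 : ℝ) xbar, ∀ y ∈ Icc (0 : ℝ) xbar, |ka x y| ≤ K)
    (hp : Measurable p) (hp' : Measurable p')
    (hpI : IntegrableOn p (Icc 0 xbar)) (hp'I : IntegrableOn p' (Icc 0 xbar)) :
    ∀ᵐ x, x ∈ Icc 0 xbar →
      |aggOp xbar ka p x - aggOp xbar ka p' x| ≤
        1 / 2 * |aggGain ka p (p - p') x| + 1 / 2 * |aggGain ka (p - p') p' x|
          + K * (∫ y in (0 : ℝ)..xbar, |p y|) * |p x - p' x|
          + K * (∫ y in (0 : ℝ)..xbar, |p y - p' y|) * |p' x| := by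
  have hdI := hpI.sub hp'I
  filter_upwards [ae_intervalIntegrable_aggGain_integrand hK hka_meas hka hp hp hpI hpI,
    ae_intervalIntegrable_aggGain_integrand hK hka_meas hka hp' hp' hp'I hp'I,
    ae_intervalIntegrable_aggGain_integrand hK hka_meas hka hp (hp.sub hp') hpI hdI,
    ae_intervalIntegrable_aggGain_integrand hK hka_meas hka (hp.sub hp') hp' hdI hp'I]
    with x h₁ h₂ h₃ h₄ hx
  have hdiff : aggOp xbar ka p x - aggOp xbar ka p' x =
      1 / 2 * (aggGain ka p (p - p') x + aggGain ka (p - p') p' x)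
        - ((p - p') x * aggLossRate xbar ka p x + p' x * aggLossRate xbar ka (p - p') x) := by
    rw [aggOp, aggOp, ← aggGain_sub_aggGain (h₁ hx) (h₂ hx) (h₃ hx) (h₄ hx),
      ← aggLossRate_sub (intervalIntegrable_kernel_mul hka_meas hka hpI hx)
        (intervalIntegrable_kernel_mul hka_meas hka hp'I hx)]
    simp only [aggGain, aggLossRate, Pi.sub_apply]
    ring
  rw [hdiff]
  calc _ ≤ 1 / 2 * (|aggGain ka p (p - p') x| + |aggGain ka (p - p') p' x|)
          + (|(p - p') x| * |aggLossRate xbar ka p x|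
            + |p' x| * |aggLossRate xbar ka (p - p') x|) := by
        refine (abs_sub _ _).trans (add_le_add ?_ ?_)
        · rw [abs_mul, abs_of_pos (by norm_num : (0 : ℝ) < 1 / 2)]
          gcongr
          exact abs_add_le _ _
        · exact (abs_add_le _ _).trans_eq (by rw [abs_mul, abs_mul])
    _ ≤ 1 / 2 * (|aggGain ka p (p - p') x| + |aggGain ka (p - p') p' x|)
          + (|(p - p') x| * (K * ∫ y in (0 : ℝ)..xbar, |p y|)
            + |p' x| * (K * ∫ y in (0 : ℝ)..xbar, |(p - p') y|)) := by
        gcongr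
        · exact abs_aggLossRate_le hka hpI hx
        · exact abs_aggLossRate_le hka hdI hx
    _ = _ := by simp only [Pi.sub_apply]; ring

theorem exists_majorant_aggOp_sub_aggOp (hxbar : 0 ≤ xbar) (hK : 0 ≤ K)
    (hka_meas : Measurable (Function.uncurry ka))
    (hka : ∀ x ∈ Icc (0 : ℝ) xbar, ∀ y ∈ Icc (0 : ℝ) xbar, |ka x y| ≤ K)
    (hp : Measurable p) (hp' : Measurable p')
    (hpI : IntegrableOn p (Icc 0 xbar)) (hp'I : IntegrableOn p' (Icc 0 xbar)) :
    ∃ g : ℝ → ℝ, IntervalIntegrable g volume 0 xbar ∧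
      (∀ᵐ x, x ∈ Icc 0 xbar → |aggOp xbar ka p x - aggOp xbar ka p' x| ≤ g x) ∧
      ∫ x in (0 : ℝ)..xbar, g x ≤
        3 / 2 * K * ((∫ x in (0 : ℝ)..xbar, |p x|) + ∫ x in (0 : ℝ)..xbar, |p' x|) *
          ∫ x in (0 : ℝ)..xbar, |p x - p' x| := by
  have hdI := hpI.sub hp'I
  have hIcc (f : ℝ → ℝ) (hf : IntegrableOn f (Icc 0 xbar)) :
      IntervalIntegrable (fun x => |f x|) volume 0 xbar :=
    ((intervalIntegrable_iff_integrableOn_Icc_of_le hxbar).2 hf).abs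
  have i₁ := (intervalIntegrable_aggGain hxbar hK hka_meas hka hp (hp.sub hp') hpI hdI).abs
    |>.const_mul (1 / 2)
  have i₂ := (intervalIntegrable_aggGain hxbar hK hka_meas hka (hp.sub hp') hp' hdI hp'I).abs
    |>.const_mul (1 / 2)
  have i₃ : IntervalIntegrable (fun x => K * (∫ y in (0 : ℝ)..xbar, |p y|) * |p x - p' x|)
      volume 0 xbar := (hIcc _ hdI).const_mul _
  have i₄ := (hIcc _ hp'I).const_mul (K * ∫ y in (0 : ℝ)..xbar, |p y - p' y|)
  refine ⟨_, ((i₁.add i₂).add i₃).add i₄,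
    ae_abs_aggOp_sub_aggOp_le hK hka_meas hka hp hp' hpI hp'I, ?_⟩
  rw [intervalIntegral.integral_add ((i₁.add i₂).add i₃) i₄,
    intervalIntegral.integral_add (i₁.add i₂) i₃, intervalIntegral.integral_add i₁ i₂]
  simp only [intervalIntegral.integral_const_mul]
  have hG₁ := integral_abs_aggGain_le hxbar hK hka_meas hka hp (hp.sub hp') hpI hdI
  have hG₂ := integral_abs_aggGain_le hxbar hK hka_meas hka (hp.sub hp') hp' hdI hp'I
  simp only [Pi.sub_apply] at hG₁ hG₂
  linarith

end Aggregation

theorem abs_remOp_sub_remOp_le {μ p p' : ℝ → ℝ} {M x : ℝ} (hμ : |μ x| ≤ M) :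
    |remOp μ p x - remOp μ p' x| ≤ M * |p x - p' x| := by
  rw [remOp, remOp, show -μ x * p x - -μ x * p' x = -(μ x * (p x - p' x)) by ring, abs_neg,
    abs_mul]
  gcongr

theorem aggOp_add_remOp_locally_lipschitz_general
    (xbar : ℝ) (hxbar : 0 < xbar) (K M C0 : ℝ) (hK : 0 ≤ K)
    (ka : ℝ → ℝ → ℝ) (hka_meas : Measurable (Function.uncurry ka))
    (hka : ∀ x ∈ Set.Icc (0 : ℝ) xbar, ∀ y ∈ Set.Icc (0 : ℝ) xbar, |ka x y| ≤ K)
    (μ : ℝ → ℝ) (hμ : ∀ x ∈ Set.Icc (0 : ℝ) xbar, |μ x| ≤ M)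
    (b btil : ℝ → ℝ) (hb : Measurable b) (hbtil : Measurable btil)
    (hbI : IntegrableOn b (Set.Icc 0 xbar)) (hbtilI : IntegrableOn btil (Set.Icc 0 xbar))
    (hbC : (∫ x in (0 : ℝ)..xbar, |b x|) ≤ C0)
    (hbtilC : (∫ x in (0 : ℝ)..xbar, |btil x|) ≤ C0) :
    (∫ x in (0 : ℝ)..xbar,
        |(aggOp xbar ka b x + remOp μ b x) - (aggOp xbar ka btil x + remOp μ btil x)|) ≤
      (3 * C0 * K + M) * ∫ x in (0 : ℝ)..xbar, |b x - btil x| := by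
  set D := ∫ x in (0 : ℝ)..xbar, |b x - btil x|
  have hD : 0 ≤ D := integral_nonneg hxbar.le fun _ _ => abs_nonneg _
  obtain ⟨g, hg, hAg, hgD⟩ :=
    exists_majorant_aggOp_sub_aggOp hxbar.le hK hka_meas hka hb hbtil hbI hbtilI
  have hR : IntervalIntegrable (fun x => M * |b x - btil x|) volume 0 xbar :=
    ((intervalIntegrable_iff_integrableOn_Icc_of_le hxbar.le).2 (hbI.sub hbtilI)).abs.const_mul M
  have hpointwise : ∀ᵐ x, x ∈ Icc 0 xbar →
      |(aggOp xbar ka b x + remOp μ b x) - (aggOp xbar ka btil x + remOp μ btil x)| ≤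
        g x + M * |b x - btil x| := by
    filter_upwards [hAg] with x hAx hx
    rw [add_sub_add_comm]
    exact (abs_add_le _ _).trans (add_le_add (hAx hx) (abs_remOp_sub_remOp_le (hμ x hx)))
  calc _ ≤ ∫ x in (0 : ℝ)..xbar, (g x + M * |b x - btil x|) :=
        integral_abs_le_of_ae_abs_le hxbar.le (hg.add hR) hpointwise
    _ = (∫ x in (0 : ℝ)..xbar, g x) + M * D := by
        rw [intervalIntegral.integral_add hg hR, intervalIntegral.integral_const_mul]
    _ ≤ (3 * C0 * K + M) * D := by
        nlinarith [mul_le_mul_of_nonneg_left (add_le_add hbC hbtilC) (mul_nonneg hK hD)]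

/-- Local Lipschitz estimate for the aggregation-plus-removal operator on `L¹([0, x̄])`:
`‖(A + R)[b] − (A + R)[b̃]‖₁ ≤ (3 C₀ ‖k_a‖_∞ + ‖μ‖_∞) ‖b − b̃‖₁`. -/
theorem aggOp_add_remOp_locally_lipschitz
    (xbar : ℝ) (hxbar : 0 < xbar) (K M C0 : ℝ) (hK : 0 ≤ K) (hM : 0 ≤ M) (hC0 : 0 ≤ C0)
    (ka : ℝ → ℝ → ℝ) (hka_meas : Measurable (Function.uncurry ka))
    (hka : ∀ x ∈ Set.Icc (0 : ℝ) xbar, ∀ y ∈ Set.Icc (0 : ℝ) xbar, |ka x y| ≤ K)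
    (μ : ℝ → ℝ) (hμ_meas : Measurable μ) (hμ : ∀ x ∈ Set.Icc (0 : ℝ) xbar, |μ x| ≤ M)
    (b btil : ℝ → ℝ) (hb : Measurable b) (hbtil : Measurable btil)
    (hbI : IntegrableOn b (Set.Icc 0 xbar)) (hbtilI : IntegrableOn btil (Set.Icc 0 xbar))
    (hbC : (∫ x in (0 : ℝ)..xbar, |b x|) ≤ C0)
    (hbtilC : (∫ x in (0 : ℝ)..xbar, |btil x|) ≤ C0) :
    (∫ x in (0 : ℝ)..xbar,
        |(aggOp xbar ka b x + remOp μ b x) - (aggOp xbar ka btil x + remOp μ btil x)|) ≤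
      (3 * C0 * K + M) * ∫ x in (0 : ℝ)..xbar, |b x - btil x| :=
  aggOp_add_remOp_locally_lipschitz_general xbar hxbar K M C0 hK ka hka_meas hka μ hμ b btil hb
    hbtil hbI hbtilI hbC hbtilC
end

section
/- Fix x̄ > 0 and K ≥ 0. Let k_a : ℝ × ℝ → ℝ be measurable with |k_a(x, y)| ≤ K on [0, x̄] × [0, x̄], and let b : ℝ → ℝ be measurable and integrable on [0, x̄]. Define A[b](x) = (1/2)∫₀^{x} k_a(x − y, y) b(x − y) b(y) dy − b(x)∫₀^{x̄} k_a(x, y) b(y) dy. Then ∫₀^{x̄} |A[b](x)| dx ≤ (3/2) · K · (∫₀^{x̄} |b(x)| dx)². -/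
open MeasureTheory intervalIntegral

/-!
Pointwise on `[0, x̄]`, the gain term of `A[b]` is bounded by `K/2` times the convolution
`F ⋆ F` of `F = |b| 𝟙_[0, x̄]` with itself, and the loss term by `K ‖b‖₁ |b|`. Integrating,
`∫ F ⋆ F = (∫ F)² = ‖b‖₁²` by Fubini, so `‖A[b]‖₁ ≤ K/2 ‖b‖₁² + K ‖b‖₁²`.
-/

open Convolution

theorem abs_intervalIntegral_mul_le {a c K : ℝ} {k g : ℝ → ℝ} (hac : a ≤ c)
    (hk : ∀ y ∈ Set.Ioc a c, |k y| ≤ K) (hg : IntervalIntegrable (fun y => |g y|) volume a c) :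
    |∫ y in a..c, k y * g y| ≤ K * ∫ y in a..c, |g y| := by
  have hbound : ∀ y ∈ Set.Ioc a c, ‖k y * g y‖ ≤ K * |g y| := fun y hy => by
    rw [Real.norm_eq_abs, abs_mul]
    exact mul_le_mul_of_nonneg_right (hk y hy) (abs_nonneg _)
  rw [← intervalIntegral.integral_const_mul, ← Real.norm_eq_abs]
  exact norm_integral_le_of_norm_le hac (ae_of_all _ hbound) (hg.const_mul K)

theorem intervalIntegral_le_integral {f : ℝ → ℝ} {a c : ℝ} (hac : a ≤ c) (hf : Integrable f)
    (hf_nonneg : ∀ x, 0 ≤ f x) : ∫ x in a..c, f x ≤ ∫ x, f x := by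
  rw [intervalIntegral.integral_of_le hac]
  exact setIntegral_le_integral hf (ae_of_all _ hf_nonneg)

noncomputable def truncAbs (xbar : ℝ) (b : ℝ → ℝ) : ℝ → ℝ :=
  (Set.Icc 0 xbar).indicator fun t => |b t|

namespace truncAbs

variable {xbar : ℝ} {b : ℝ → ℝ}

theorem nonneg (x : ℝ) : 0 ≤ truncAbs xbar b x :=
  Set.indicator_nonneg (fun _ _ => abs_nonneg _) x

theorem apply_of_mem {x : ℝ} (hx : x ∈ Set.Icc 0 xbar) : truncAbs xbar b x = |b x| :=
  Set.indicator_of_mem hx _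

theorem integrable (hbI : IntegrableOn b (Set.Icc 0 xbar)) : Integrable (truncAbs xbar b) :=
  IntegrableOn.integrable_indicator hbI.abs measurableSet_Icc

theorem integral_eq (hxbar : 0 ≤ xbar) :
    ∫ x, truncAbs xbar b x = ∫ x in (0 : ℝ)..xbar, |b x| := by
  rw [truncAbs, MeasureTheory.integral_indicator measurableSet_Icc,
    intervalIntegral.integral_of_le hxbar, integral_Icc_eq_integral_Ioc]

theorem intervalIntegral_conv_le (hxbar : 0 ≤ xbar) (hbI : IntegrableOn b (Set.Icc 0 xbar)) :
    ∫ x in (0 : ℝ)..xbar, (truncAbs xbar b ⋆[ContinuousLinearMap.mul ℝ ℝ] truncAbs xbar b) x ≤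
      (∫ x in (0 : ℝ)..xbar, |b x|) ^ 2 := by
  have hF := integrable hbI
  calc _ ≤ ∫ x, (truncAbs xbar b ⋆[ContinuousLinearMap.mul ℝ ℝ] truncAbs xbar b) x :=
        intervalIntegral_le_integral hxbar (hF.integrable_convolution _ hF)
          fun x => integral_nonneg fun t => mul_nonneg (nonneg t) (nonneg _)
    _ = (∫ x in (0 : ℝ)..xbar, |b x|) ^ 2 := by
        rw [integral_convolution _ hF hF, integral_eq hxbar, sq]
        rfl

end truncAbs

section Bounds

variable {xbar K : ℝ} {ka : ℝ → ℝ → ℝ} {b : ℝ → ℝ}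

theorem abs_gain_le_conv
    (hka : ∀ x ∈ Set.Icc (0 : ℝ) xbar, ∀ y ∈ Set.Icc (0 : ℝ) xbar, |ka x y| ≤ K) (hK : 0 ≤ K)
    {x : ℝ} (hx : x ∈ Set.Icc 0 xbar)
    (hconv : ConvolutionExistsAt (truncAbs xbar b) (truncAbs xbar b) x
      (ContinuousLinearMap.mul ℝ ℝ)) :
    |∫ y in (0 : ℝ)..x, ka (x - y) y * b (x - y) * b y| ≤
      K * (truncAbs xbar b ⋆[ContinuousLinearMap.mul ℝ ℝ] truncAbs xbar b) x := by
  have hconv' : Integrable fun y => truncAbs xbar b y * truncAbs xbar b (x - y) := hconv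
  have hmem {y : ℝ} (hy : y ∈ Set.Icc 0 x) : y ∈ Set.Icc 0 xbar ∧ x - y ∈ Set.Icc 0 xbar :=
    ⟨⟨hy.1, hy.2.trans hx.2⟩, ⟨by linarith [hy.2], by linarith [hy.1, hx.2]⟩⟩
  have hprod : Set.EqOn (fun y => |b (x - y) * b y|)
      (fun y => truncAbs xbar b y * truncAbs xbar b (x - y)) (Set.uIcc 0 x) := fun y hy => by
    rw [Set.uIcc_of_le hx.1] at hy
    dsimp only
    rw [truncAbs.apply_of_mem (hmem hy).1, truncAbs.apply_of_mem (hmem hy).2,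
      abs_mul, mul_comm]
  simp_rw [mul_assoc]
  calc _ ≤ K * ∫ y in (0 : ℝ)..x, |b (x - y) * b y| :=
        abs_intervalIntegral_mul_le hx.1
          (fun y hy => hka _ (hmem (Set.Ioc_subset_Icc_self hy)).2 _
            (hmem (Set.Ioc_subset_Icc_self hy)).1)
          (hconv'.intervalIntegrable.congr (hprod.mono Set.uIoc_subset_uIcc).symm)
    _ ≤ K * (truncAbs xbar b ⋆[ContinuousLinearMap.mul ℝ ℝ] truncAbs xbar b) x := by
        rw [intervalIntegral.integral_congr hprod]
        exact mul_le_mul_of_nonneg_left (intervalIntegral_le_integral hx.1 hconv'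
          fun y => mul_nonneg (truncAbs.nonneg y) (truncAbs.nonneg _)) hK

theorem abs_aggOp_le
    (hka : ∀ x ∈ Set.Icc (0 : ℝ) xbar, ∀ y ∈ Set.Icc (0 : ℝ) xbar, |ka x y| ≤ K) (hK : 0 ≤ K)
    (hbI : IntegrableOn b (Set.Icc 0 xbar)) {x : ℝ} (hx : x ∈ Set.Icc 0 xbar)
    (hconv : ConvolutionExistsAt (truncAbs xbar b) (truncAbs xbar b) x
      (ContinuousLinearMap.mul ℝ ℝ)) :
    |aggOp xbar ka b x| ≤
      1 / 2 * (K * (truncAbs xbar b ⋆[ContinuousLinearMap.mul ℝ ℝ] truncAbs xbar b) x) +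
        |b x| * (K * ∫ y in (0 : ℝ)..xbar, |b y|) := by
  have hxbar : 0 ≤ xbar := hx.1.trans hx.2
  have hloss : |∫ y in (0 : ℝ)..xbar, ka x y * b y| ≤ K * ∫ y in (0 : ℝ)..xbar, |b y| :=
    abs_intervalIntegral_mul_le hxbar (fun y hy => hka x hx y (Set.Ioc_subset_Icc_self hy))
      ((intervalIntegrable_iff_integrableOn_Icc_of_le hxbar).2 hbI.abs)
  calc |aggOp xbar ka b x|
      ≤ 1 / 2 * |∫ y in (0 : ℝ)..x, ka (x - y) y * b (x - y) * b y| +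
          |b x| * |∫ y in (0 : ℝ)..xbar, ka x y * b y| := by
        refine (abs_sub _ _).trans_eq ?_
        rw [abs_mul, abs_mul, abs_of_pos one_half_pos]
    _ ≤ _ := by
        gcongr
        exact abs_gain_le_conv hka hK hx hconv

end Bounds

theorem aggOp_L1_bound_general
    (xbar : ℝ) (hxbar : 0 < xbar) (K : ℝ) (hK : 0 ≤ K)
    (ka : ℝ → ℝ → ℝ)
    (hka : ∀ x ∈ Set.Icc (0 : ℝ) xbar, ∀ y ∈ Set.Icc (0 : ℝ) xbar, |ka x y| ≤ K)
    (b : ℝ → ℝ) (hbI : IntegrableOn b (Set.Icc 0 xbar)) :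
    (∫ x in (0 : ℝ)..xbar, |aggOp xbar ka b x|) ≤
      (3 / 2) * K * (∫ x in (0 : ℝ)..xbar, |b x|) ^ 2 := by
  set I := ∫ x in (0 : ℝ)..xbar, |b x|
  set F := truncAbs xbar b
  have hF : Integrable F := truncAbs.integrable hbI
  have hconvI : IntervalIntegrable (F ⋆[ContinuousLinearMap.mul ℝ ℝ] F) volume 0 xbar :=
    (hF.integrable_convolution _ hF).intervalIntegrable
  have hbI' : IntervalIntegrable (fun x => |b x|) volume 0 xbar :=
    (intervalIntegrable_iff_integrableOn_Icc_of_le hxbar.le).2 hbI.abs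
  have hpointwise : ∀ᵐ x, x ∈ Set.Ioc 0 xbar → ‖|aggOp xbar ka b x|‖ ≤
      1 / 2 * (K * (F ⋆[ContinuousLinearMap.mul ℝ ℝ] F) x) + |b x| * (K * I) := by
    filter_upwards [hF.ae_convolution_exists (ContinuousLinearMap.mul ℝ ℝ) hF] with x hconv hx
    rw [Real.norm_eq_abs, abs_abs]
    exact abs_aggOp_le hka hK hbI (Set.Ioc_subset_Icc_self hx) hconv
  calc _ ≤ ‖∫ x in (0 : ℝ)..xbar, |aggOp xbar ka b x|‖ := le_abs_self _
    _ ≤ ∫ x in (0 : ℝ)..xbar,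
          (1 / 2 * (K * (F ⋆[ContinuousLinearMap.mul ℝ ℝ] F) x) + |b x| * (K * I)) :=
        norm_integral_le_of_norm_le hxbar.le hpointwise
          (((hconvI.const_mul K).const_mul _).add (hbI'.mul_const _))
    _ = 1 / 2 * (K * ∫ x in (0 : ℝ)..xbar, (F ⋆[ContinuousLinearMap.mul ℝ ℝ] F) x) +
          I * (K * I) := by
        rw [intervalIntegral.integral_add ((hconvI.const_mul K).const_mul _) (hbI'.mul_const _),
          intervalIntegral.integral_const_mul, intervalIntegral.integral_const_mul,
          intervalIntegral.integral_mul_const]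
    _ ≤ _ := by
        nlinarith [mul_le_mul_of_nonneg_left (truncAbs.intervalIntegral_conv_le hxbar.le hbI) hK]

/-- The aggregation operator maps `L¹([0, x̄])` into itself:
`‖A[b]‖₁ ≤ (3/2)‖k_a‖_∞ ‖b‖₁²`. -/
theorem aggOp_L1_bound
    (xbar : ℝ) (hxbar : 0 < xbar) (K : ℝ) (hK : 0 ≤ K)
    (ka : ℝ → ℝ → ℝ) (hka_meas : Measurable (Function.uncurry ka))
    (hka : ∀ x ∈ Set.Icc (0 : ℝ) xbar, ∀ y ∈ Set.Icc (0 : ℝ) xbar, |ka x y| ≤ K)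
    (b : ℝ → ℝ) (hb : Measurable b) (hbI : IntegrableOn b (Set.Icc 0 xbar)) :
    (∫ x in (0 : ℝ)..xbar, |aggOp xbar ka b x|) ≤
      (3 / 2) * K * (∫ x in (0 : ℝ)..xbar, |b x|) ^ 2 :=
  aggOp_L1_bound_general xbar hxbar K hK ka hka b hbI
end
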